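/- (Positivity of Dunkl's intertwining operator) Let k ≥ 0. If p ∈ Π satisfies p(x) ≥ 0 for all x ∈ ℝ^N, then V_k p(x) ≥ 0 for all x ∈ ℝ^N. -/

import Mathlib

open scoped RealInnerProductSpace BigOperators
open MeasureTheory Filter

noncomputable section

/-- Euclidean space ℝ^N. -/
abbrev Vec (N : ℕ) := EuclideanSpace ℝ (Fin N)

/-- The reflection in the hyperplane orthogonal to `α`:
`σ_α x = x − (2⟨α,x⟩/⟨α,α⟩) α`. -/
def reflAt {N : ℕ} (α : Vec N) (x : Vec N) : Vec N :=
  x - ((2 * ⟪α, x⟫) / ⟪α, α⟫) • α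

/-- A (reduced) root system, normalized so that `⟨α,α⟩ = 2` for all roots. -/
structure IsRootSystem {N : ℕ} (R : Finset (Vec N)) : Prop where
  ne_zero : ∀ α ∈ R, α ≠ 0
  neg_mem : ∀ α ∈ R, -α ∈ R
  reduced : ∀ α ∈ R, ∀ β ∈ R, (∃ c : ℝ, β = c • α) → β = α ∨ β = -α
  refl_mem : ∀ α ∈ R, ∀ β ∈ R, reflAt α β ∈ R
  normalized : ∀ α ∈ R, ⟪α, α⟫ = (2 : ℝ)

/-- A positive subsystem `R₊` of a root system `R`: `R` is the disjoint union of
`R₊` and `−R₊`, the two parts being separated by a hyperplane through the origin. -/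
structure IsPositiveSubsystem {N : ℕ} (R Rp : Finset (Vec N)) : Prop where
  subset : Rp ⊆ R
  mem_or_neg_mem : ∀ α ∈ R, α ∈ Rp ∨ -α ∈ Rp
  not_mem_and_neg_mem : ∀ α ∈ R, ¬(α ∈ Rp ∧ -α ∈ Rp)
  separated : ∃ u : Vec N, ∀ α ∈ Rp, 0 < ⟪u, α⟫

/-- The finite reflection group associated with the root system `R`: the subgroup
of the orthogonal group generated by the reflections `σ_α`, `α ∈ R`. -/
def reflGroup {N : ℕ} (R : Finset (Vec N)) : Subgroup (Vec N ≃ₗᵢ[ℝ] Vec N) :=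
  Subgroup.closure { g | ∃ α ∈ R, ∀ x, g x = reflAt α x }

/-- A multiplicity function: a `G`-invariant function on the root system. -/
def IsMultiplicity {N : ℕ} (R : Finset (Vec N)) (k : Vec N → ℂ) : Prop :=
  ∀ g ∈ reflGroup R, ∀ α ∈ R, k (g α) = k α

/-- The Dunkl operator `T_ξ` associated with `R₊` and multiplicity `k`, with
the difference quotient `(f(x) − f(σ_α x))/⟨α,x⟩` interpreted as
`∫₀¹ ∂_α f(x − t⟨α,x⟩α) dt`. -/
def dunklOp {N : ℕ} (k : Vec N → ℂ) (Rp : Finset (Vec N)) (ξ : Vec N)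
    (f : Vec N → ℂ) (x : Vec N) : ℂ :=
  fderiv ℝ f x ξ + ∑ α ∈ Rp, k α * ((⟪α, ξ⟫ : ℝ) : ℂ) *
    ∫ t in (0:ℝ)..(1:ℝ), fderiv ℝ f (x - (t * ⟪α, x⟫) • α) α

/-- The `i`-th standard basis vector of ℝ^N. -/
def stdVec {N : ℕ} (i : Fin N) : Vec N := EuclideanSpace.single i (1 : ℝ)

/-- `T_i = T_{e_i}`. -/
def dunklOpI {N : ℕ} (k : Vec N → ℂ) (Rp : Finset (Vec N)) (i : Fin N) :
    (Vec N → ℂ) → Vec N → ℂ :=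
  dunklOp k Rp (stdVec i)

/-- The Dunkl Laplacian `Δ_k = Σ_i T_i²`. -/
def dunklLap {N : ℕ} (k : Vec N → ℂ) (Rp : Finset (Vec N)) (f : Vec N → ℂ) (x : Vec N) : ℂ :=
  ∑ i : Fin N, dunklOpI k Rp i (dunklOpI k Rp i f) x

/-- The Euclidean Laplacian `Δ = Σ_i ∂_i²`. -/
def euclLap {N : ℕ} (f : Vec N → ℂ) (x : Vec N) : ℂ :=
  ∑ i : Fin N, fderiv ℝ (fun y => fderiv ℝ f y (stdVec i)) x (stdVec i)

/-- Iterates of the Dunkl Laplacian. -/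
def dunklLapPow {N : ℕ} (k : Vec N → ℂ) (Rp : Finset (Vec N)) :
    ℕ → (Vec N → ℂ) → Vec N → ℂ
  | 0, f => f
  | n + 1, f => dunklLap k Rp (dunklLapPow k Rp n f)

/-- The operator `e^{−Δ_k/2} = Σ_n (−1)^n (2^n n!)^{−1} Δ_k^n` (a terminating sum on
each polynomial). -/
def expNegHalfDunklLap {N : ℕ} (k : Vec N → ℂ) (Rp : Finset (Vec N))
    (f : Vec N → ℂ) (x : Vec N) : ℂ :=
  ∑' n : ℕ, ((-1) ^ n / ((2 : ℂ) ^ n * (n.factorial : ℂ))) * dunklLapPow k Rp n f x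

/-- The polynomial function on ℝ^N attached to `p ∈ Π = ℂ[ℝ^N]`. -/
def polyFun {N : ℕ} (p : MvPolynomial (Fin N) ℂ) (x : Vec N) : ℂ :=
  MvPolynomial.eval (fun i => ((x i : ℝ) : ℂ)) p

/-- The operator `T^a = Π_i T_i^{a_i}` (the `T_i` commute). -/
def dunklMonoOp {N : ℕ} (k : Vec N → ℂ) (Rp : Finset (Vec N)) (a : Fin N →₀ ℕ)
    (f : Vec N → ℂ) : Vec N → ℂ :=
  (List.finRange N).foldr (fun i g => (dunklOpI k Rp i)^[a i] g) f

/-- `p(T)q` : substitute the Dunkl operators `T_i` for the coordinates in `p` and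
apply the result to `q`. -/
def dunklPolyOp {N : ℕ} (k : Vec N → ℂ) (Rp : Finset (Vec N))
    (p : MvPolynomial (Fin N) ℂ) (f : Vec N → ℂ) (x : Vec N) : ℂ :=
  ∑ a ∈ p.support, p.coeff a * dunklMonoOp k Rp a f x

/-- The Dunkl pairing `[p,q]_k = (p(T)q)(0)`. -/
def dunklPairing {N : ℕ} (k : Vec N → ℂ) (Rp : Finset (Vec N))
    (p q : MvPolynomial (Fin N) ℂ) : ℂ :=
  dunklPolyOp k Rp p (polyFun q) 0

/-- The weight function `w_k(x) = Π_{α ∈ R₊} |⟨α,x⟩|^{2k(α)}`. -/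
def wk {N : ℕ} (k : Vec N → ℝ) (Rp : Finset (Vec N)) (x : Vec N) : ℝ :=
  ∏ α ∈ Rp, |⟪α, x⟫| ^ (2 * k α)

/-- The index `γ = Σ_{α ∈ R₊} k(α)`. -/
def gammaIdx {N : ℕ} (k : Vec N → ℝ) (Rp : Finset (Vec N)) : ℝ := ∑ α ∈ Rp, k α

/-- The Macdonald–Mehta–Selberg constant `c_k = ∫ e^{−|x|²/2} w_k(x) dx`. -/
def ck {N : ℕ} (k : Vec N → ℝ) (Rp : Finset (Vec N)) : ℝ :=
  ∫ x : Vec N, Real.exp (-‖x‖ ^ 2 / 2) * wk k Rp x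

/-- The defining property of the Dunkl kernel `E_k`: for each `y ∈ ℂ^N`,
`x ↦ E_k(x,y)` is the unique real-analytic solution of `T_ξ f = ⟨ξ,y⟩ f` with
`f(0) = 1`. -/
def IsDunklKernel {N : ℕ} (k : Vec N → ℂ) (Rp : Finset (Vec N))
    (E : Vec N → (Fin N → ℂ) → ℂ) : Prop :=
  ∀ y : Fin N → ℂ,
    AnalyticOn ℝ (fun x => E x y) Set.univ ∧ E 0 y = 1 ∧
      ∀ ξ : Vec N, ∀ x : Vec N,
        dunklOp k Rp ξ (fun z => E z y) x = (∑ i, ((ξ i : ℝ) : ℂ) * y i) * E x y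

/-- The directional derivative `∂_ξ` on polynomials. -/
def pderivDir {N : ℕ} (ξ : Vec N) (p : MvPolynomial (Fin N) ℂ) : MvPolynomial (Fin N) ℂ :=
  ∑ i : Fin N, ((ξ i : ℝ) : ℂ) • MvPolynomial.pderiv i p

/-- The defining properties of Dunkl's intertwining operator `V_k`:
a linear isomorphism of `Π` with `V_k(𝒫_n) = 𝒫_n`, `V_k = id` on constants, and
`T_ξ ∘ V_k = V_k ∘ ∂_ξ`. -/
def IsIntertwiner {N : ℕ} (k : Vec N → ℂ) (Rp : Finset (Vec N))
    (V : MvPolynomial (Fin N) ℂ ≃ₗ[ℂ] MvPolynomial (Fin N) ℂ) : Prop :=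
  (∀ n : ℕ, Submodule.map (V : MvPolynomial (Fin N) ℂ →ₗ[ℂ] MvPolynomial (Fin N) ℂ)
      (MvPolynomial.homogeneousSubmodule (Fin N) ℂ n)
      = MvPolynomial.homogeneousSubmodule (Fin N) ℂ n) ∧
  (∀ c : ℂ, V (MvPolynomial.C c) = MvPolynomial.C c) ∧
  (∀ ξ : Vec N, ∀ p : MvPolynomial (Fin N) ℂ, ∀ x : Vec N,
      dunklOp k Rp ξ (polyFun (V p)) x = polyFun (V (pderivDir ξ p)) x)

/-- The open Weyl chamber attached to `R₊`. -/
def chamber {N : ℕ} (Rp : Finset (Vec N)) : Set (Vec N) := {x | ∀ α ∈ Rp, 0 < ⟪α, x⟫}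

/-- The cone `C_δ = {x ∈ C : ⟨α,x⟩ > δ|x| for all α ∈ R₊}`. -/
def chamberCone {N : ℕ} (Rp : Finset (Vec N)) (δ : ℝ) : Set (Vec N) :=
  {x | ∀ α ∈ Rp, δ * ‖x‖ < ⟪α, x⟫}

/-- The weighted measure `w_k(x) dx`. -/
def muW {N : ℕ} (k : Vec N → ℝ) (Rp : Finset (Vec N)) : Measure (Vec N) :=
  volume.withDensity (fun x => ENNReal.ofReal (wk k Rp x))

/-- The probability measure `dm_k = c_k^{−1} e^{−|x|²/2} w_k(x) dx`. -/
def muM {N : ℕ} (k : Vec N → ℝ) (Rp : Finset (Vec N)) : Measure (Vec N) :=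
  volume.withDensity (fun x => ENNReal.ofReal ((ck k Rp)⁻¹ * Real.exp (-‖x‖ ^ 2 / 2) * wk k Rp x))

/-- The Dunkl transform `f̂^k(ξ) = c_k^{−1} ∫ f(x) E_k(x,−iξ) w_k(x) dx`. -/
def dunklTransform {N : ℕ} (k : Vec N → ℝ) (Rp : Finset (Vec N))
    (E : Vec N → (Fin N → ℂ) → ℂ) (f : Vec N → ℂ) (ξ : Vec N) : ℂ :=
  (((ck k Rp : ℝ) : ℂ))⁻¹ *
    ∫ x : Vec N, f x * E x (fun i => -Complex.I * ((ξ i : ℝ) : ℂ)) * ((wk k Rp x : ℝ) : ℂ)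

/-- `μ` is a representing probability measure at `x` for the intertwining operator `V`:
a probability measure supported in the convex hull of the `G`-orbit of `x` with
`V p (x) = ∫ p dμ` for all polynomials `p`. -/
def IsRepMeasure {N : ℕ} (R : Finset (Vec N))
    (V : MvPolynomial (Fin N) ℂ ≃ₗ[ℂ] MvPolynomial (Fin N) ℂ)
    (x : Vec N) (μ : Measure (Vec N)) : Prop :=
  IsProbabilityMeasure μ ∧
  μ ((convexHull ℝ {z : Vec N | ∃ g ∈ reflGroup R, z = g x})ᶜ) = 0 ∧
  ∀ p : MvPolynomial (Fin N) ℂ, polyFun (V p) x = ∫ ξ, polyFun p ξ ∂μ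

/-- The elements of `L²(μ)` represented by a function in `S`. -/
def lpOf {N : ℕ} (μ : Measure (Vec N)) (S : Set (Vec N → ℂ)) : Set (Lp ℂ 2 μ) :=
  {F | ∃ f ∈ S, (F : Vec N → ℂ) =ᵐ[μ] f}

/-- Iterated partial derivatives `∂_y^m` of a function of `y ∈ ℂ^N`. -/
def iterPderivC {N : ℕ} (m : Fin N → ℕ) (F : (Fin N → ℂ) → ℂ) : (Fin N → ℂ) → ℂ :=
  (List.finRange N).foldr
    (fun i G =>
      (fun (H : (Fin N → ℂ) → ℂ) (y : Fin N → ℂ) => fderiv ℂ H y (Pi.single i 1))^[m i] G) F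

end

/-!
Set `U(x, y) = V_k[p(· + y)](x)`. Since `V_k` preserves degrees and fixes constants,
`U(0, y) = p(y)`, while `U(x, 0) = V_k p(x)`. Along the characteristic `t ↦ (t x, y + (1 - t) x)`
the intertwining relation `T_x V_k = V_k ∂_x` makes the two gradient terms cancel, leaving only the
reflection terms of the Dunkl operator at `t = 1`: the derivative is
`∑_{α ∈ R₊} k(α) (U(σ_α x, y) - U(x, y))`. This is nonnegative wherever `U(·, y)` is minimal on the
sphere through `x`, because the `σ_α` are isometries and `k ≥ 0`. A minimum principle for this
transport equation then carries `L ∘ U(0, ·) ≥ 0` over to `L ∘ U(·, 0) ≥ 0` for `L = Re` and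
`L = ±Im`.
-/

open Set Filter Topology MvPolynomial

section MinimumPrinciple

lemma HasDerivAt.nonpos_of_isMinOn_Icc {f : ℝ → ℝ} {a b D : ℝ} (hab : a < b)
    (hf : HasDerivAt f D b) (hmin : IsMinOn f (Icc a b) b) : D ≤ 0 := by
  have hcone : a - b ∈ posTangentConeAt (Icc a b) b :=
    sub_mem_posTangentConeAt_of_segment_subset (by rw [segment_symm, segment_eq_Icc hab.le])
  have h := hmin.localize.hasFDerivWithinAt_nonneg hf.hasFDerivAt.hasFDerivWithinAt hcone
  have h' : 0 ≤ (a - b) * D := by simpa using h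
  nlinarith

lemma norm_smul_add_norm_add_smul_le {E : Type*} [NormedAddCommGroup E] [NormedSpace ℝ E]
    (x y : E) {t : ℝ} (ht : t ∈ Icc (0 : ℝ) 1) :
    ‖t • x‖ + ‖y + (1 - t) • x‖ ≤ ‖x‖ + ‖y‖ := by
  have h := norm_add_le y ((1 - t) • x)
  rw [norm_smul, Real.norm_of_nonneg (sub_nonneg.2 ht.2)] at h
  rw [norm_smul, Real.norm_of_nonneg ht.1]
  linarith

variable {E F : Type*} [NormedAddCommGroup E] [NormedSpace ℝ E] [ProperSpace E]
  [NormedAddCommGroup F] [ProperSpace F]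

lemma exists_zero_minimizing_norm_fst {w : E × F → ℝ} (hw : Continuous w)
    (hw0 : ∀ y, 0 < w (0, y)) {R : ℝ} {z₀ : E × F} (hz₀R : ‖z₀.1‖ + ‖z₀.2‖ ≤ R)
    (hz₀ : w z₀ ≤ 0) :
    ∃ z : E × F, ‖z.1‖ + ‖z.2‖ ≤ R ∧ 0 < ‖z.1‖ ∧ w z = 0 ∧
      ∀ z' : E × F, ‖z'.1‖ ≤ ‖z.1‖ → ‖z'.1‖ + ‖z'.2‖ ≤ R → 0 ≤ w z' := by
  set S := {z : E × F | ‖z.1‖ + ‖z.2‖ ≤ R ∧ w z ≤ 0}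
  have hS : IsCompact S := by
    refine Metric.isCompact_of_isClosed_isBounded
      ((isClosed_le (continuous_fst.norm.add continuous_snd.norm) continuous_const).inter
        (isClosed_le hw continuous_const))
      ((Metric.isBounded_closedBall (x := 0) (r := R)).subset fun z hz => ?_)
    rw [mem_closedBall_zero_iff, Prod.norm_def]
    exact max_le (by linarith [norm_nonneg z.2, hz.1]) (by linarith [norm_nonneg z.1, hz.1])
  obtain ⟨z, hzS, hmin⟩ := hS.exists_isMinOn ⟨z₀, hz₀R, hz₀⟩ continuous_fst.norm.continuousOn
  have hz : 0 < ‖z.1‖ := by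
    refine (norm_nonneg _).lt_of_ne fun h => ?_
    have h0 := hw0 z.2
    rw [← norm_eq_zero.1 h.symm] at h0
    linarith [hzS.2]
  have hnonneg (z' : E × F) (h1 : ‖z'.1‖ ≤ ‖z.1‖) (h2 : ‖z'.1‖ + ‖z'.2‖ ≤ R) : 0 ≤ w z' := by
    have hpos (t : ℝ) (ht : t ∈ Ioo (0 : ℝ) 1) : 0 < w (t • z'.1, z'.2) := by
      by_contra! hle
      have hnorm : ‖t • z'.1‖ = t * ‖z'.1‖ := by rw [norm_smul, Real.norm_of_nonneg ht.1.le]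
      have hmem : (t • z'.1, z'.2) ∈ S := ⟨by nlinarith [ht.2, norm_nonneg z'.1], hle⟩
      have : ‖z.1‖ ≤ t * ‖z'.1‖ := hnorm ▸ hmin hmem
      nlinarith [mul_le_mul_of_nonneg_left h1 ht.1.le, mul_lt_mul_of_pos_right ht.2 hz]
    have hlim : Tendsto (fun t : ℝ => w (t • z'.1, z'.2)) (𝓝[<] 1) (𝓝 (w z')) := by
      have hcont : Continuous fun t : ℝ => w (t • z'.1, z'.2) := by fun_prop
      simpa using (hcont.tendsto 1).mono_left nhdsWithin_le_nhds
    exact ge_of_tendsto hlim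
      (eventually_of_mem (Ioo_mem_nhdsLT zero_lt_one) fun t ht => (hpos t ht).le)
  exact ⟨z, hzS.1, hz, le_antisymm hzS.2 (hnonneg z le_rfl hzS.1), hnonneg⟩

theorem nonneg_of_hasDerivAt_characteristic {u : E → E → ℝ}
    (hu : Continuous fun z : E × E => u z.1 z.2) (hu0 : ∀ y, 0 ≤ u 0 y)
    (hchar : ∀ x y, (∀ x', ‖x'‖ = ‖x‖ → u x y ≤ u x' y) →
      ∃ D, 0 ≤ D ∧ HasDerivAt (fun t : ℝ => u (t • x) (y + (1 - t) • x)) D 1)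
    (x₀ : E) : 0 ≤ u x₀ 0 := by
  by_contra! hneg
  -- `w` is positive at `x = 0` and vanishes at `(x₀, 0)`; its `ε ‖x‖` term makes the derivative
  -- along a characteristic strictly positive at a zero of `w`.
  set ε := -u x₀ 0 / (‖x₀‖ + 1)
  have hε : 0 < ε := div_pos (neg_pos.2 hneg) (by positivity)
  set w : E × E → ℝ := fun z => u z.1 z.2 + ε * (‖z.1‖ + 1)
  have hw0 (y : E) : 0 < w (0, y) := by simp only [w, norm_zero]; linarith [hu0 y]
  have hwx₀ : w (x₀, 0) = 0 := by
    simp only [w, ε]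
    field_simp
    ring
  obtain ⟨⟨x, y⟩, hR, hx, hw, hmin⟩ := exists_zero_minimizing_norm_fst (by fun_prop) hw0
    (z₀ := (x₀, 0)) (R := ‖x₀‖) (by simp) hwx₀.le
  dsimp only at hR hx hw hmin
  obtain ⟨D, hD, hderiv⟩ := hchar x y fun x' hx' => by
    have := hmin (x', y) hx'.le (by simpa [hx'] using hR)
    simp only [w, hx'] at this hw
    linarith
  set g := fun t : ℝ => u (t • x) (y + (1 - t) • x) + ε * (t * ‖x‖ + 1)
  have hg : HasDerivAt g (D + ε * ‖x‖) 1 := by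
    refine hderiv.add ?_
    simpa using (((hasDerivAt_id (1 : ℝ)).mul_const ‖x‖).add_const 1).const_mul ε
  have hgmin : IsMinOn g (Icc 0 1) 1 := by
    intro t ht
    have hnorm : ‖t • x‖ = t * ‖x‖ := by rw [norm_smul, Real.norm_of_nonneg ht.1]
    have := hmin (t • x, y + (1 - t) • x) (by rw [hnorm]; nlinarith [ht.2])
      ((norm_smul_add_norm_add_smul_le x y ht).trans hR)
    simp only [w, hnorm] at this hw
    simp only [g, mem_ofPred_eq, one_smul, sub_self, zero_smul, add_zero, one_mul]
    linarith
  have := hg.nonpos_of_isMinOn_Icc zero_lt_one hgmin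
  nlinarith [mul_pos hε hx]

end MinimumPrinciple

noncomputable section

section PolynomialCalculus

variable {N : ℕ}

lemma pderivDir_add (ξ : Vec N) (p q : MvPolynomial (Fin N) ℂ) :
    pderivDir ξ (p + q) = pderivDir ξ p + pderivDir ξ q := by
  simp only [pderivDir, map_add, smul_add, Finset.sum_add_distrib]

lemma pderivDir_smul (ξ : Vec N) (c : ℂ) (p : MvPolynomial (Fin N) ℂ) :
    pderivDir ξ (c • p) = c • pderivDir ξ p := by
  simp only [pderivDir, Derivation.map_smul, Finset.smul_sum, smul_comm c]

lemma pderivDir_sum {ι : Type*} (ξ : Vec N) (s : Finset ι) (f : ι → MvPolynomial (Fin N) ℂ) :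
    pderivDir ξ (∑ i ∈ s, f i) = ∑ i ∈ s, pderivDir ξ (f i) := by
  simp only [pderivDir, map_sum, Finset.smul_sum]
  exact Finset.sum_comm

lemma pderivDir_mul (ξ : Vec N) (p q : MvPolynomial (Fin N) ℂ) :
    pderivDir ξ (p * q) = pderivDir ξ p * q + p * pderivDir ξ q := by
  simp only [pderivDir, Derivation.leibniz, smul_eq_mul, smul_add, Finset.sum_add_distrib,
    Finset.sum_mul, Finset.mul_sum, smul_mul_assoc, mul_smul_comm, mul_comm q, add_comm]

lemma pderivDir_C (ξ : Vec N) (c : ℂ) : pderivDir ξ (C c : MvPolynomial (Fin N) ℂ) = 0 := by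
  simp [pderivDir]

lemma pderivDir_X (ξ : Vec N) (j : Fin N) :
    pderivDir ξ (X j : MvPolynomial (Fin N) ℂ) = C ((ξ j : ℝ) : ℂ) := by
  simp [pderivDir, pderiv_X, Pi.single_apply, smul_eq_C_mul]

lemma pderivDir_neg_left (ξ : Vec N) (p : MvPolynomial (Fin N) ℂ) :
    pderivDir (-ξ) p = -pderivDir ξ p := by
  simp [pderivDir, neg_smul, Finset.sum_neg_distrib]

lemma polyFun_eq_eval (q : MvPolynomial (Fin N) ℂ) (x : Vec N) :
    polyFun q x = eval (fun i => ((x i : ℝ) : ℂ)) q := rfl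

lemma polyFun_zero_eq_coeff (q : MvPolynomial (Fin N) ℂ) : polyFun q 0 = coeff 0 q := by
  simp [polyFun, ← constantCoeff_eq]

lemma polyFun_map_sum_smul {ι F : Type*} [Fintype ι]
    [FunLike F (MvPolynomial (Fin N) ℂ) (MvPolynomial (Fin N) ℂ)]
    [LinearMapClass F ℂ (MvPolynomial (Fin N) ℂ) (MvPolynomial (Fin N) ℂ)] (T : F) (c : ι → ℂ)
    (r : ι → MvPolynomial (Fin N) ℂ) (x : Vec N) :
    polyFun (T (∑ i, c i • r i)) x = ∑ i, c i * polyFun (T (r i)) x := by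
  simp [polyFun_eq_eval]

def polyFDeriv (q : MvPolynomial (Fin N) ℂ) (x : Vec N) : Vec N →L[ℝ] ℂ :=
  ∑ j, polyFun (pderiv j q) x • (Complex.ofRealCLM ∘L EuclideanSpace.proj j)

lemma polyFDeriv_apply (q : MvPolynomial (Fin N) ℂ) (x ξ : Vec N) :
    polyFDeriv q x ξ = polyFun (pderivDir ξ q) x := by
  simp only [polyFDeriv, pderivDir, polyFun_eq_eval, map_sum, FunLike.coe_sum,
    Finset.sum_apply, smul_apply, ContinuousLinearMap.comp_apply,
    Complex.ofRealCLM_apply, smul_eq_mul, smul_eq_C_mul, eval_mul, eval_C]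
  exact Finset.sum_congr rfl fun j _ => mul_comm _ _

lemma hasFDerivAt_polyFun (q : MvPolynomial (Fin N) ℂ) (x : Vec N) :
    HasFDerivAt (polyFun q) (polyFDeriv q x) x := by
  induction q using MvPolynomial.induction_on with
  | C c =>
    have hC : polyFun (C c : MvPolynomial (Fin N) ℂ) = fun _ => c := funext fun z => by
      simp [polyFun_eq_eval]
    rw [hC]
    refine (hasFDerivAt_const c x).congr_fderiv (ContinuousLinearMap.ext fun ξ => ?_)
    simp [polyFDeriv_apply, pderivDir_C, polyFun_eq_eval]
  | add p q hp hq =>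
    have hadd : polyFun (p + q) = fun z => polyFun p z + polyFun q z := funext fun z => by
      simp [polyFun_eq_eval]
    rw [hadd]
    refine (hp.add hq).congr_fderiv (ContinuousLinearMap.ext fun ξ => ?_)
    simp [polyFDeriv_apply, pderivDir_add, polyFun_eq_eval]
  | mul_X p j hp =>
    have hmul : polyFun (p * X j) = fun z => polyFun p z * ((z j : ℝ) : ℂ) := funext fun z => by
      simp [polyFun_eq_eval]
    rw [hmul]
    refine (hp.mul (Complex.ofRealCLM ∘L EuclideanSpace.proj j).hasFDerivAt).congr_fderiv
      (ContinuousLinearMap.ext fun ξ => ?_)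
    simp only [polyFun_eq_eval, ContinuousLinearMap.comp_apply, PiLp.proj_apply,
      Complex.ofRealCLM_apply, add_apply, smul_apply, smul_eq_mul, polyFDeriv_apply, pderivDir_mul,
      pderivDir_X, map_add, map_mul, eval_X, eval_C]
    ring

@[fun_prop]
lemma continuous_polyFun (q : MvPolynomial (Fin N) ℂ) : Continuous (polyFun q) :=
  continuous_iff_continuousAt.2 fun x => (hasFDerivAt_polyFun q x).continuousAt

lemma fderiv_polyFun_apply (q : MvPolynomial (Fin N) ℂ) (x ξ : Vec N) :
    fderiv ℝ (polyFun q) x ξ = polyFun (pderivDir ξ q) x := by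
  rw [(hasFDerivAt_polyFun q x).fderiv, polyFDeriv_apply]

lemma contDiff_polyFun (q : MvPolynomial (Fin N) ℂ) : ContDiff ℝ 1 (polyFun q) := by
  refine contDiff_one_iff_fderiv.2 ⟨fun x => (hasFDerivAt_polyFun q x).differentiableAt, ?_⟩
  rw [funext fun x => (hasFDerivAt_polyFun q x).fderiv]
  exact continuous_finsetSum _ fun j _ => (continuous_polyFun _).smul continuous_const

lemma HasDerivAt.polyFun_comp (q : MvPolynomial (Fin N) ℂ) {γ : ℝ → Vec N} {γ' : Vec N} {t : ℝ}
    (hγ : HasDerivAt γ γ' t) :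
    HasDerivAt (fun s => polyFun q (γ s)) (polyFun (pderivDir γ' q) (γ t)) t := by
  have h := (hasFDerivAt_polyFun q (γ t)).comp_hasDerivAt t hγ
  rwa [polyFDeriv_apply] at h

end PolynomialCalculus

section Shift

variable {N : ℕ}

def shift (y : Vec N) : MvPolynomial (Fin N) ℂ →ₐ[ℂ] MvPolynomial (Fin N) ℂ :=
  aeval fun i => X i + C ((y i : ℝ) : ℂ)

lemma shift_zero (q : MvPolynomial (Fin N) ℂ) : shift 0 q = q := by
  simp [shift]

lemma polyFun_shift (y : Vec N) (q : MvPolynomial (Fin N) ℂ) (x : Vec N) :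
    polyFun (shift y q) x = polyFun q (x + y) := by
  induction q using MvPolynomial.induction_on with
  | C c => simp [shift, polyFun_eq_eval]
  | add p q hp hq => simp_all [polyFun_eq_eval]
  | mul_X p j hp => simp_all [shift, polyFun_eq_eval]

/-- A separation of variables `q (z + y) = ∑ i, a i (y) * r i (z)`: through it, the image of
`q (· + y)` under any linear map depends polynomially on `y`. -/
structure IsShiftExpansion {ι : Type*} [Fintype ι] (q : MvPolynomial (Fin N) ℂ)
    (a r : ι → MvPolynomial (Fin N) ℂ) : Prop where
  shift_eq : ∀ y, shift y q = ∑ i, polyFun (a i) y • r i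
  pderivDir_shift_eq : ∀ ξ y, pderivDir ξ (shift y q) = ∑ i, polyFun (pderivDir ξ (a i)) y • r i

lemma isShiftExpansion_C (c : ℂ) :
    IsShiftExpansion (C c : MvPolynomial (Fin N) ℂ) (fun _ : Unit => 1) (fun _ => C c) where
  shift_eq y := by simp [shift, polyFun_eq_eval]
  pderivDir_shift_eq ξ y := by simp [shift, pderivDir, polyFun_eq_eval]

lemma isShiftExpansion_X (j : Fin N) :
    IsShiftExpansion (X j : MvPolynomial (Fin N) ℂ) ![1, X j] ![X j, 1] where
  shift_eq y := by simp [shift, polyFun_eq_eval, smul_eq_C_mul]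
  pderivDir_shift_eq ξ y := by
    simp [shift, pderivDir, pderiv_X, Pi.single_apply, polyFun_eq_eval, smul_eq_C_mul]

lemma IsShiftExpansion.add {ι κ : Type*} [Fintype ι] [Fintype κ]
    {p q : MvPolynomial (Fin N) ℂ} {a r : ι → MvPolynomial (Fin N) ℂ}
    {b t : κ → MvPolynomial (Fin N) ℂ} (hp : IsShiftExpansion p a r)
    (hq : IsShiftExpansion q b t) : IsShiftExpansion (p + q) (Sum.elim a b) (Sum.elim r t) where
  shift_eq y := by simp [Fintype.sum_sum_type, hp.shift_eq, hq.shift_eq]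
  pderivDir_shift_eq ξ y := by
    simp [Fintype.sum_sum_type, pderivDir_add, hp.pderivDir_shift_eq, hq.pderivDir_shift_eq]

lemma IsShiftExpansion.mul {ι κ : Type*} [Fintype ι] [Fintype κ]
    {p q : MvPolynomial (Fin N) ℂ} {a r : ι → MvPolynomial (Fin N) ℂ}
    {b t : κ → MvPolynomial (Fin N) ℂ} (hp : IsShiftExpansion p a r)
    (hq : IsShiftExpansion q b t) :
    IsShiftExpansion (p * q) (fun ij : ι × κ => a ij.1 * b ij.2)
      (fun ij => r ij.1 * t ij.2) where
  shift_eq y := by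
    simp only [map_mul, hp.shift_eq, hq.shift_eq, Finset.sum_mul_sum, Fintype.sum_prod_type,
      polyFun_eq_eval, smul_mul_smul_comm]
  pderivDir_shift_eq ξ y := by
    rw [map_mul, pderivDir_mul, hp.pderivDir_shift_eq, hq.pderivDir_shift_eq, hp.shift_eq,
      hq.shift_eq, Finset.sum_mul_sum, Finset.sum_mul_sum, ← Finset.sum_add_distrib,
      Fintype.sum_prod_type]
    refine Finset.sum_congr rfl fun i _ => ?_
    rw [← Finset.sum_add_distrib]
    refine Finset.sum_congr rfl fun j _ => ?_
    simp only [pderivDir_mul, polyFun_eq_eval, eval_add, eval_mul, add_smul, smul_mul_smul_comm]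

lemma exists_isShiftExpansion (q : MvPolynomial (Fin N) ℂ) :
    ∃ (ι : Type) (_ : Fintype ι) (a r : ι → MvPolynomial (Fin N) ℂ), IsShiftExpansion q a r := by
  induction q using MvPolynomial.induction_on with
  | C c => exact ⟨Unit, inferInstance, _, _, isShiftExpansion_C c⟩
  | add p q hp hq =>
    obtain ⟨ι, _, a, r, hp⟩ := hp
    obtain ⟨κ, _, b, t, hq⟩ := hq
    exact ⟨ι ⊕ κ, inferInstance, _, _, hp.add hq⟩
  | mul_X p j hp =>
    obtain ⟨ι, _, a, r, hp⟩ := hp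
    exact ⟨ι × Fin 2, inferInstance, _, _, hp.mul (isShiftExpansion_X j)⟩

end Shift

section Dunkl

variable {N : ℕ}

lemma norm_reflAt (α x : Vec N) : ‖reflAt α x‖ = ‖x‖ := by
  rcases eq_or_ne α 0 with rfl | hα
  · simp [reflAt]
  have hαα : ⟪α, α⟫ ≠ 0 := inner_self_ne_zero.2 hα
  refine sq_eq_sq₀ (norm_nonneg _) (norm_nonneg _) |>.1 ?_
  rw [reflAt, norm_sub_sq_real, norm_smul, real_inner_smul_right, mul_pow, Real.norm_eq_abs,
    sq_abs, ← real_inner_self_eq_norm_sq α, real_inner_comm]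
  field_simp
  ring

lemma reflAt_eq_of_inner_self (α x : Vec N) (hα : ⟪α, α⟫ = 2) : reflAt α x = x - ⟪α, x⟫ • α := by
  rw [reflAt, hα, mul_div_cancel_left₀ _ two_ne_zero]

lemma smul_integral_fderiv_segment {E : Type*} [NormedAddCommGroup E] [NormedSpace ℝ E]
    {f : E → ℂ} (hf : ContDiff ℝ 1 f) (x a : E) (c : ℝ) :
    c • ∫ t in (0 : ℝ)..1, fderiv ℝ f (x - (t * c) • a) a = f x - f (x - c • a) := by
  have hpath (t : ℝ) : HasDerivAt (fun s : ℝ => x - (s * c) • a) (-(c • a)) t := by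
    simpa using (((hasDerivAt_id t).mul_const c).smul_const a).const_sub x
  have hderiv (t : ℝ) : HasDerivAt (fun s => -f (x - (s * c) • a))
      (c • fderiv ℝ f (x - (t * c) • a) a) t := by
    refine (((hf.differentiable one_ne_zero) _).hasFDerivAt.comp_hasDerivAt t (hpath t)).neg
      |>.congr_deriv ?_
    simp
  rw [← intervalIntegral.integral_smul, intervalIntegral.integral_eq_sub_of_hasDerivAt
    (fun t _ => hderiv t) (Continuous.intervalIntegrable (by fun_prop) _ _)]
  simp only [one_mul, zero_mul, zero_smul, sub_zero]
  abel

lemma dunklOp_self (k : Vec N → ℂ) {Rp : Finset (Vec N)} (hRp : ∀ α ∈ Rp, ⟪α, α⟫ = 2)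
    {f : Vec N → ℂ} (hf : ContDiff ℝ 1 f) (x : Vec N) :
    dunklOp k Rp x f x = fderiv ℝ f x x + ∑ α ∈ Rp, k α * (f x - f (reflAt α x)) := by
  unfold dunklOp
  congr 1
  refine Finset.sum_congr rfl fun α hα => ?_
  rw [reflAt_eq_of_inner_self α x (hRp α hα), ← smul_integral_fderiv_segment hf, mul_assoc,
    Complex.real_smul, real_inner_comm]

lemma IsIntertwiner.coeff_zero {k : Vec N → ℂ} {Rp : Finset (Vec N)}
    {V : MvPolynomial (Fin N) ℂ ≃ₗ[ℂ] MvPolynomial (Fin N) ℂ} (hV : IsIntertwiner k Rp V)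
    (q : MvPolynomial (Fin N) ℂ) : coeff 0 (V q) = coeff 0 q := by
  have hcomponent (n : ℕ) : coeff 0 (V (homogeneousComponent n q)) =
      coeff 0 (homogeneousComponent n q) := by
    rcases Nat.eq_zero_or_pos n with rfl | hn
    · rw [homogeneousComponent_zero, hV.2.1]
    have hq := homogeneousComponent_isHomogeneous n q
    have hVq : (V (homogeneousComponent n q)).IsHomogeneous n := by
      rw [← mem_homogeneousSubmodule, ← hV.1 n]
      exact Submodule.mem_map_of_mem ((mem_homogeneousSubmodule _ _).2 hq)
    have hdeg : (0 : Fin N →₀ ℕ).degree ≠ n := by simp; omega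
    rw [hq.coeff_eq_zero hdeg, hVq.coeff_eq_zero hdeg]
  conv_lhs => rw [← sum_homogeneousComponent q]
  rw [map_sum, coeff_sum, Finset.sum_congr rfl fun n _ => hcomponent n, ← coeff_sum,
    sum_homogeneousComponent]

lemma IsIntertwiner.polyFun_apply_zero {k : Vec N → ℂ} {Rp : Finset (Vec N)}
    {V : MvPolynomial (Fin N) ℂ ≃ₗ[ℂ] MvPolynomial (Fin N) ℂ} (hV : IsIntertwiner k Rp V)
    (q : MvPolynomial (Fin N) ℂ) : polyFun (V q) 0 = polyFun q 0 := by
  rw [polyFun_zero_eq_coeff, polyFun_zero_eq_coeff, hV.coeff_zero]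

lemma IsIntertwiner.hasDerivAt_characteristic {k : Vec N → ℂ} {Rp : Finset (Vec N)}
    {V : MvPolynomial (Fin N) ℂ ≃ₗ[ℂ] MvPolynomial (Fin N) ℂ} (hV : IsIntertwiner k Rp V)
    (hRp : ∀ α ∈ Rp, ⟪α, α⟫ = 2) {ι : Type*} [Fintype ι] {p : MvPolynomial (Fin N) ℂ}
    {a r : ι → MvPolynomial (Fin N) ℂ} (hp : IsShiftExpansion p a r) (x y : Vec N) :
    HasDerivAt (fun t : ℝ => polyFun (V (shift (y + (1 - t) • x) p)) (t • x))
      (-∑ α ∈ Rp, k α * (polyFun (V (shift y p)) x - polyFun (V (shift y p)) (reflAt α x))) 1 := by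
  have hDV_sum (c : ι → ℂ) (w : Vec N) :
      polyFun (pderivDir x (V (∑ i, c i • r i))) w =
        ∑ i, c i * polyFun (pderivDir x (V (r i))) w := by
    simp [pderivDir_sum, pderivDir_smul, polyFun_eq_eval]
  have hterm (i : ι) : HasDerivAt
      (fun t : ℝ => polyFun (a i) (y + (1 - t) • x) * polyFun (V (r i)) (t • x))
      (-(polyFun (pderivDir x (a i)) y * polyFun (V (r i)) x) +
        polyFun (a i) y * polyFun (pderivDir x (V (r i))) x) 1 := by
    have hline : HasDerivAt (fun t : ℝ => y + (1 - t) • x) (-x) 1 := by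
      simpa using ((hasDerivAt_id (1 : ℝ)).const_sub 1).smul_const x |>.const_add y
    have hray : HasDerivAt (fun t : ℝ => t • x) x 1 := by
      simpa using (hasDerivAt_id (1 : ℝ)).smul_const x
    refine ((hline.polyFun_comp (a i)).fun_mul (hray.polyFun_comp (V (r i)))).congr_deriv ?_
    simp [pderivDir_neg_left, polyFun_eq_eval]
  have hsum := HasDerivAt.fun_sum (u := Finset.univ) fun i _ => hterm i
  simp only [hp.shift_eq, polyFun_map_sum_smul] at hsum ⊢
  refine hsum.congr_deriv ?_
  -- the intertwining relation `T_x (V q) = V (∂_x q)` at the point `x`, for `q = p (· + y)`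
  have hdunkl := hV.2.2 x (shift y p) x
  rw [dunklOp_self k hRp (contDiff_polyFun _), fderiv_polyFun_apply,
    hp.pderivDir_shift_eq, hp.shift_eq] at hdunkl
  simp only [polyFun_map_sum_smul, hDV_sum] at hdunkl
  rw [Finset.sum_add_distrib, Finset.sum_neg_distrib]
  linear_combination hdunkl

theorem IsIntertwiner.clm_polyFun_nonneg {k : Vec N → ℝ} {Rp : Finset (Vec N)}
    {V : MvPolynomial (Fin N) ℂ ≃ₗ[ℂ] MvPolynomial (Fin N) ℂ}
    (hV : IsIntertwiner (fun α => ((k α : ℝ) : ℂ)) Rp V) (hRp : ∀ α ∈ Rp, ⟪α, α⟫ = 2)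
    (hk : ∀ α ∈ Rp, 0 ≤ k α) {p : MvPolynomial (Fin N) ℂ} (L : ℂ →L[ℝ] ℝ)
    (hp : ∀ y, 0 ≤ L (polyFun p y)) (x : Vec N) : 0 ≤ L (polyFun (V p) x) := by
  obtain ⟨ι, _, a, r, he⟩ := exists_isShiftExpansion p
  set u : Vec N → Vec N → ℝ := fun x y => L (polyFun (V (shift y p)) x)
  have hu : Continuous fun z : Vec N × Vec N => u z.1 z.2 := by
    simp only [u, he.shift_eq, polyFun_map_sum_smul]
    fun_prop
  have hu0 (y : Vec N) : 0 ≤ u 0 y := by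
    simpa [u, hV.polyFun_apply_zero, polyFun_shift] using hp y
  have hchar (x y : Vec N) (hmin : ∀ x', ‖x'‖ = ‖x‖ → u x y ≤ u x' y) :
      ∃ D, 0 ≤ D ∧ HasDerivAt (fun t : ℝ => u (t • x) (y + (1 - t) • x)) D 1 := by
    refine ⟨_, ?_, L.hasFDerivAt.comp_hasDerivAt 1 (hV.hasDerivAt_characteristic hRp he x y)⟩
    simp only [map_neg, map_sum, ← Complex.real_smul, map_smul, map_sub, smul_eq_mul,
      neg_nonneg]
    exact Finset.sum_nonpos fun α hα =>
      mul_nonpos_of_nonneg_of_nonpos (hk α hα) (sub_nonpos.2 (hmin _ (norm_reflAt α x)))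
  simpa [u, shift_zero] using nonneg_of_hasDerivAt_characteristic hu hu0 hchar x

end Dunkl

end

theorem intertwiner_positive_general {N : ℕ} (R Rp : Finset (Vec N))
    (hR : IsRootSystem R) (hRp : IsPositiveSubsystem R Rp)
    (k : Vec N → ℝ)
    (hk0 : ∀ α ∈ R, 0 ≤ k α)
    (V : MvPolynomial (Fin N) ℂ ≃ₗ[ℂ] MvPolynomial (Fin N) ℂ)
    (hV : IsIntertwiner (fun α => ((k α : ℝ) : ℂ)) Rp V)
    (p : MvPolynomial (Fin N) ℂ)
    (hp : ∀ x : Vec N, (polyFun p x).im = 0 ∧ 0 ≤ (polyFun p x).re) :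
    ∀ x : Vec N, (polyFun (V p) x).im = 0 ∧ 0 ≤ (polyFun (V p) x).re := by
  intro x
  have hL (L : ℂ →L[ℝ] ℝ) (hLp : ∀ y, 0 ≤ L (polyFun p y)) : 0 ≤ L (polyFun (V p) x) :=
    hV.clm_polyFun_nonneg (fun α hα => hR.normalized α (hRp.subset hα))
      (fun α hα => hk0 α (hRp.subset hα)) L hLp x
  have him : 0 ≤ (polyFun (V p) x).im := hL Complex.imCLM fun y => (hp y).1.ge
  have him' : 0 ≤ -(polyFun (V p) x).im := hL (-Complex.imCLM) fun y => by simp [(hp y).1]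
  exact ⟨by linarith, hL Complex.reCLM fun y => (hp y).2⟩

/-- (Positivity of Dunkl's intertwining operator) Let `k ≥ 0`.
If `p ∈ Π` satisfies `p(x) ≥ 0` for all `x ∈ ℝ^N`, then `V_k p(x) ≥ 0` for all `x`. -/
theorem intertwiner_positive {N : ℕ} (hN : 1 ≤ N) (R Rp : Finset (Vec N))
    (hR : IsRootSystem R) (hRp : IsPositiveSubsystem R Rp)
    (k : Vec N → ℝ) (hk : IsMultiplicity R (fun α => ((k α : ℝ) : ℂ)))
    (hk0 : ∀ α ∈ R, 0 ≤ k α)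
    (V : MvPolynomial (Fin N) ℂ ≃ₗ[ℂ] MvPolynomial (Fin N) ℂ)
    (hV : IsIntertwiner (fun α => ((k α : ℝ) : ℂ)) Rp V)
    (p : MvPolynomial (Fin N) ℂ)
    (hp : ∀ x : Vec N, (polyFun p x).im = 0 ∧ 0 ≤ (polyFun p x).re) :
    ∀ x : Vec N, (polyFun (V p) x).im = 0 ∧ 0 ≤ (polyFun (V p) x).re :=
  intertwiner_positive_general R Rp hR hRp k hk0 V hV p hp
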